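/- Let K be a local field and n a positive integer with char(K) ∤ n. Let f be a complex-valued function defined on the complement of a finite subset of ℙ¹(K) such that for every t₀ ∈ ℙ¹(K) there is a punctured neighbourhood U_{t₀} of t₀ on which the value of f(t) depends only on (t − t₀) mod (K^*)^n (with 1/t in place of t − t₀ when t₀ = ∞). Then f is locally constant outside a finite subset of ℙ¹(K): there is a finite set Σ ⊂ ℙ¹(K) such that every t₁ ∈ ℙ¹(K) ∖ Σ has a neighbourhood on which f is defined and constant. -/

import Mathlib

/-!
Newton's iteration (using completeness and `v n < ⊤`) shows that every `u` with
`v (u - 1) > 2 v n` is an `n`-th power. Hence the class of `t - t₀` modulo `(K^*)^n` is constant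
near any `x ≠ t₀`, so by hypothesis `f` is locally constant at every `x ∉ E` in a punctured
neighbourhood of some `t₀` or of `∞`. The complement of the neighbourhood of `∞` is a ball, which
is compact (finite residue field plus completeness); finitely many of the neighbourhoods of points
`t₀` cover it, and `Σ` consists of these `t₀`, `∞` and `E`.
-/

/-- A (nonarchimedean) local field structure on a field `K`: a discrete valuation
`v : K → ℤ ∪ {⊤}` (with `v 0 = ⊤`), normalized so that `v (K^*) = ℤ`, with respect to
which `K` is complete, and whose residue field is finite. -/
structure IsLocalField {K : Type*} [Field K] (v : K → WithTop ℤ) : Prop where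
  map_zero : v 0 = ⊤
  ne_top : ∀ x : K, x ≠ 0 → v x ≠ ⊤
  map_mul : ∀ x y : K, v (x * y) = v x + v y
  min_le_add : ∀ x y : K, min (v x) (v y) ≤ v (x + y)
  exists_eq : ∀ k : ℤ, ∃ x : K, v x = (k : WithTop ℤ)
  complete : ∀ a : ℕ → K,
      (∀ k : ℤ, ∃ N : ℕ, ∀ m m' : ℕ, N ≤ m → N ≤ m' → (k : WithTop ℤ) ≤ v (a m - a m')) →
      ∃ L : K, ∀ k : ℤ, ∃ N : ℕ, ∀ m : ℕ, N ≤ m → (k : WithTop ℤ) ≤ v (a m - L)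
  finite_residue : ∃ T : Finset K, ∀ x : K, 0 ≤ v x → ∃ t ∈ T, (1 : WithTop ℤ) ≤ v (x - t)

open Filter

theorem coe_le_sub_coe_of_add_le {a : WithTop ℤ} {b c : ℤ} (h : ((b + c : ℤ) : WithTop ℤ) ≤ a) :
    (b : WithTop ℤ) ≤ a - c := by
  cases a with
  | top => simp
  | coe a => norm_cast at h ⊢; omega

namespace IsLocalField

variable {K : Type*} [Field K] {v : K → WithTop ℤ}

theorem map_one (hK : IsLocalField v) : v 1 = 0 := by
  have h := hK.map_mul 1 1
  rw [one_mul] at h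
  lift v 1 to ℤ using hK.ne_top 1 one_ne_zero with z
  norm_cast at h ⊢
  omega

def toAddValuation (hK : IsLocalField v) : AddValuation K (WithTop ℤ) :=
  AddValuation.of v hK.map_zero hK.map_one hK.min_le_add hK.map_mul

theorem map_neg (hK : IsLocalField v) (x : K) : v (-x) = v x :=
  hK.toAddValuation.map_neg x

theorem map_sub_swap (hK : IsLocalField v) (x y : K) : v (x - y) = v (y - x) :=
  hK.toAddValuation.map_sub_swap x y

theorem map_div (hK : IsLocalField v) (x y : K) : v (x / y) = v x - v y :=
  hK.toAddValuation.map_div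

theorem map_eq_of_lt_sub (hK : IsLocalField v) {x y : K} (h : v x < v (y - x)) : v y = v x :=
  hK.toAddValuation.map_eq_of_lt_sub h

theorem le_map_add (hK : IsLocalField v) {x y : K} {g : WithTop ℤ} (hx : g ≤ v x)
    (hy : g ≤ v y) : g ≤ v (x + y) :=
  hK.toAddValuation.map_le_add hx hy

theorem ne_zero_of_map_ne_top (hK : IsLocalField v) {x : K} (h : v x ≠ ⊤) : x ≠ 0 := by
  rintro rfl
  exact h hK.map_zero

theorem eq_zero_of_forall_le (hK : IsLocalField v) {x : K} (c : ℤ)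
    (h : ∀ j : ℕ, ((c + j : ℤ) : WithTop ℤ) ≤ v x) : x = 0 := by
  by_contra hx
  lift v x to ℤ using hK.ne_top x hx with z hz
  have := h (z - c + 1).toNat
  norm_cast at this
  omega

def integers (hK : IsLocalField v) : Subring K where
  carrier := {x | 0 ≤ v x}
  mul_mem' {x y} hx hy := by
    simp only [Set.mem_ofPred_eq, hK.map_mul] at *
    exact add_nonneg hx hy
  one_mem' := hK.map_one.ge
  add_mem' hx hy := hK.le_map_add hx hy
  zero_mem' := by simp [hK.map_zero]
  neg_mem' {x} hx := by simpa [Set.mem_ofPred_eq, hK.map_neg] using hx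

theorem map_nonneg (hK : IsLocalField v) (x : hK.integers) : 0 ≤ v x := x.2

theorem map_le_of_dvd (hK : IsLocalField v) {x y : hK.integers} (h : x ∣ y) : v x ≤ v y := by
  obtain ⟨q, rfl⟩ := h
  rw [Subring.coe_mul, hK.map_mul]
  exact le_add_of_nonneg_right (hK.map_nonneg q)

theorem map_natCast_nonneg (hK : IsLocalField v) (n : ℕ) : 0 ≤ v (n : K) := by
  simpa using hK.map_nonneg (n : hK.integers)

theorem map_sub_le_map_pow_sub_pow (hK : IsLocalField v) {x y : K} (hx : 0 ≤ v x)
    (hy : 0 ≤ v y) (n : ℕ) : v (x - y) ≤ v (x ^ n - y ^ n) := by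
  simpa using hK.map_le_of_dvd (sub_dvd_pow_sub_pow (⟨x, hx⟩ : hK.integers) ⟨y, hy⟩ n)

theorem map_sq_le_map_add_pow_sub_sub (hK : IsLocalField v) {x h : K} (hx : 0 ≤ v x)
    (hh : 0 ≤ v h) (n : ℕ) : v (h ^ 2) ≤ v ((x + h) ^ n - x ^ (n - 1) * h * n - x ^ n) := by
  simpa using hK.map_le_of_dvd (sq_dvd_add_pow_sub_sub (⟨h, hh⟩ : hK.integers) ⟨x, hx⟩ n)

def ball (v : K → WithTop ℤ) (x : K) (k : ℤ) : Set K := {t | (k : WithTop ℤ) ≤ v (t - x)}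

theorem mem_ball {x t : K} {k : ℤ} : t ∈ ball v x k ↔ (k : WithTop ℤ) ≤ v (t - x) := Iff.rfl

theorem ball_antitone (x : K) : Antitone (ball v x) :=
  fun _ _ hkl _ ht => (WithTop.coe_le_coe.2 hkl).trans ht

theorem mem_ball_self (hK : IsLocalField v) (x : K) (k : ℤ) : x ∈ ball v x k := by
  simp [mem_ball, hK.map_zero]

theorem mem_ball_comm (hK : IsLocalField v) {x y : K} {k : ℤ} :
    x ∈ ball v y k ↔ y ∈ ball v x k := by
  rw [mem_ball, mem_ball, hK.map_sub_swap]

theorem ball_subset_ball_of_mem (hK : IsLocalField v) {x y : K} {k l : ℤ} (hy : y ∈ ball v x k)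
    (hkl : k ≤ l) : ball v y l ⊆ ball v x k := fun t ht => by
  rw [mem_ball, ← sub_add_sub_cancel t y x]
  exact hK.le_map_add (ball_antitone y hkl ht) hy

theorem exists_forall_mem_ball (hK : IsLocalField v) (a : ℕ → K) (c : ℤ)
    (h : ∀ j : ℕ, a (j + 1) ∈ ball v (a j) (c + j)) :
    ∃ L, ∀ j : ℕ, L ∈ ball v (a j) (c + j) := by
  have nested : ∀ i j, i ≤ j → a j ∈ ball v (a i) (c + i) := by
    intro i j hij
    induction j, hij using Nat.le_induction with
    | base => exact hK.mem_ball_self _ _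
    | succ m him ih => exact hK.ball_subset_ball_of_mem ih (by omega) (h _)
  have cauchy (k : ℤ) (m m' : ℕ) (hmm' : m ≤ m') (hm : (k - c).toNat ≤ m) :
      (k : WithTop ℤ) ≤ v (a m' - a m) :=
    ball_antitone (a m) (by omega) (nested m m' hmm')
  obtain ⟨L, hL⟩ := hK.complete a fun k => ⟨(k - c).toNat, fun m m' hm hm' => by
    rcases le_total m m' with hmm' | hmm'
    · rw [hK.map_sub_swap]; exact cauchy k m m' hmm' hm
    · exact cauchy k m' m hmm' hm'⟩
  refine ⟨L, fun j => ?_⟩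
  obtain ⟨N, hN⟩ := hL (c + j)
  have hLN : L ∈ ball v (a (max N j)) (c + j) := hK.mem_ball_comm.1 (hN _ (le_max_left N j))
  exact hK.ball_subset_ball_of_mem (nested j _ (le_max_right N j)) le_rfl hLN

theorem map_nonneg_of_mem_ball_one (hK : IsLocalField v) {x : K} {k : ℤ} (hk : 0 ≤ k)
    (hx : x ∈ ball v 1 k) : 0 ≤ v x := by
  rw [← sub_add_cancel x 1]
  exact hK.le_map_add (ball_antitone 1 hk hx) hK.map_one.ge

theorem ne_zero_of_mem_ball_one (hK : IsLocalField v) {x : K} {k : ℤ} (hk : 0 < k)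
    (hx : x ∈ ball v 1 k) : x ≠ 0 := by
  rintro rfl
  rw [mem_ball, zero_sub, hK.map_neg, hK.map_one] at hx
  norm_cast at hx
  omega

/-- Newton's iteration for `X ^ n = u` started at `1`, with the derivative `n * X ^ (n - 1)` frozen
at its value `n` at `1`: it converges only linearly, but that is enough. -/
def newtonNthRoot (n : ℕ) (u : K) : ℕ → K
  | 0 => 1
  | j + 1 => newtonNthRoot n u j - (newtonNthRoot n u j ^ n - u) / n

theorem newton_step (hK : IsLocalField v) {n : ℕ} {c : ℤ} (hc : v n = c) {a u : K} {m : ℕ}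
    (ha : a ∈ ball v 1 (c + 1)) (he : ((2 * c + 1 + m : ℤ) : WithTop ℤ) ≤ v (a ^ n - u)) :
    ((c + 1 + m : ℤ) : WithTop ℤ) ≤ v ((a ^ n - u) / n) ∧
      ((2 * c + 1 + (m + 1 : ℕ) : ℤ) : WithTop ℤ) ≤ v ((a - (a ^ n - u) / n) ^ n - u) := by
  have hn : (n : K) ≠ 0 := hK.ne_zero_of_map_ne_top (by simp [hc])
  have hc0 : 0 ≤ c := by exact_mod_cast hc ▸ hK.map_natCast_nonneg n
  have ha0 : 0 ≤ v a := hK.map_nonneg_of_mem_ball_one (by omega) ha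
  set e := a ^ n - u
  set h := -(e / n)
  have hh : ((c + 1 + m : ℤ) : WithTop ℤ) ≤ v h := by
    rw [hK.map_neg, hK.map_div, hc]
    exact coe_le_sub_coe_of_add_le (le_trans (by norm_cast; omega) he)
  refine ⟨hK.map_neg (e / n) ▸ hh, ?_⟩
  -- A Taylor remainder of valuation `≥ 2 v h`, plus `e` times something of valuation `≥ c + 1`.
  have key : (a + h) ^ n - u = ((a + h) ^ n - a ^ (n - 1) * h * n - a ^ n)
      + e * (1 ^ (n - 1) - a ^ (n - 1)) := by
    simp only [h, e]; field_simp; ring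
  rw [show a - e / n = a + h by ring, key]
  apply hK.le_map_add
  · calc ((2 * c + 1 + (m + 1 : ℕ) : ℤ) : WithTop ℤ)
        ≤ ((c + 1 + m : ℤ) : WithTop ℤ) + ((c + 1 + m : ℤ) : WithTop ℤ) := by norm_cast; omega
      _ ≤ v h + v h := add_le_add hh hh
      _ = v (h ^ 2) := by rw [sq, hK.map_mul]
      _ ≤ _ := hK.map_sq_le_map_add_pow_sub_sub ha0 (le_trans (by norm_cast; omega) hh) n
  · calc ((2 * c + 1 + (m + 1 : ℕ) : ℤ) : WithTop ℤ)
        ≤ ((2 * c + 1 + m : ℤ) : WithTop ℤ) + ((c + 1 : ℤ) : WithTop ℤ) := by norm_cast; omega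
      _ ≤ v e + v (1 - a) := add_le_add he (hK.mem_ball_comm.1 ha)
      _ ≤ v (e * (1 ^ (n - 1) - a ^ (n - 1))) := by
        rw [hK.map_mul]
        exact add_le_add le_rfl (hK.map_sub_le_map_pow_sub_pow hK.map_one.ge ha0 _)

theorem exists_pow_eq_of_mem_ball (hK : IsLocalField v) {n : ℕ} {c : ℤ} (hc : v n = c) {u : K}
    (hu : u ∈ ball v 1 (2 * c + 1)) : ∃ s ∈ ball v 1 (c + 1), s ^ n = u := by
  have hc0 : 0 ≤ c := by exact_mod_cast hc ▸ hK.map_natCast_nonneg n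
  set a := newtonNthRoot n u
  have step (j : ℕ) (h1 : a j ∈ ball v 1 (c + 1))
      (h2 : ((2 * c + 1 + j : ℤ) : WithTop ℤ) ≤ v (a j ^ n - u)) :
      a (j + 1) ∈ ball v (a j) (c + 1 + j) ∧
        ((2 * c + 1 + (j + 1 : ℕ) : ℤ) : WithTop ℤ) ≤ v (a (j + 1) ^ n - u) := by
    obtain ⟨hh, he⟩ := hK.newton_step hc h1 h2
    refine ⟨?_, he⟩
    rw [mem_ball, show a (j + 1) - a j = -((a j ^ n - u) / n) from sub_sub_cancel_left _ _,
      hK.map_neg]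
    exact hh
  have ha : ∀ j : ℕ, a j ∈ ball v 1 (c + 1) ∧
      ((2 * c + 1 + j : ℤ) : WithTop ℤ) ≤ v (a j ^ n - u) := by
    intro j
    induction j with
    | zero =>
      refine ⟨hK.mem_ball_self 1 _, ?_⟩
      simpa [a, newtonNthRoot, hK.map_sub_swap 1 u, mem_ball] using hu
    | succ j ih =>
      obtain ⟨hmem, he⟩ := step j ih.1 ih.2
      exact ⟨hK.ball_subset_ball_of_mem ih.1 (by omega) hmem, he⟩
  obtain ⟨L, hL⟩ := hK.exists_forall_mem_ball a (c + 1) fun j => (step j (ha j).1 (ha j).2).1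
  have hL1 : L ∈ ball v 1 (c + 1) := by simpa [a, newtonNthRoot] using hL 0
  refine ⟨L, hL1, ?_⟩
  refine sub_eq_zero.1 (hK.eq_zero_of_forall_le (c + 1) fun j => ?_)
  rw [← sub_add_sub_cancel _ (a j ^ n)]
  refine hK.le_map_add ?_ ?_
  · exact (hL j).trans (hK.map_sub_le_map_pow_sub_pow
      (hK.map_nonneg_of_mem_ball_one (by omega) hL1)
      (hK.map_nonneg_of_mem_ball_one (by omega) (ha j).1) n)
  · exact le_trans (by norm_cast; omega) (ha j).2

theorem exists_finset_ball_subdivision (hK : IsLocalField v) (a : K) (m : ℤ) :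
    ∃ T : Finset K, ball v a m ⊆ ⋃ t ∈ T, ball v t (m + 1) := by
  classical
  obtain ⟨p, hp⟩ := hK.exists_eq m
  have hp0 : p ≠ 0 := hK.ne_zero_of_map_ne_top (by simp [hp])
  obtain ⟨R, hR⟩ := hK.finite_residue
  refine ⟨R.image (a + p * ·), fun x hx => ?_⟩
  have hy : 0 ≤ v ((x - a) / p) := by
    rw [hK.map_div, hp]
    exact coe_le_sub_coe_of_add_le (by simpa [mem_ball] using hx)
  obtain ⟨r, hr, hxr⟩ := hR _ hy
  simp only [Set.mem_iUnion]
  refine ⟨a + p * r, Finset.mem_image_of_mem _ hr, ?_⟩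
  rw [mem_ball, show x - (a + p * r) = p * ((x - a) / p - r) by field_simp; ring, hK.map_mul, hp]
  exact add_le_add le_rfl hxr

/-- Compactness of balls. If `ball a m` had no finite subcover, subdividing it would give nested
balls without finite subcover shrinking to a point `L`; but the small ones lie in `ball L (r L)`. -/
theorem exists_finset_ball_cover (hK : IsLocalField v) (r : K → ℤ) (a : K) (m : ℤ) :
    ∃ F : Finset K, ball v a m ⊆ ⋃ t ∈ F, ball v t (r t) := by
  classical
  let Covered (b : K) (l : ℤ) : Prop := ∃ F : Finset K, ball v b l ⊆ ⋃ t ∈ F, ball v t (r t)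
  have subball (b : K) (l : ℤ) (hb : ¬ Covered b l) : ∃ b' ∈ ball v b l, ¬ Covered b' (l + 1) := by
    by_contra! hall
    choose! G hG using hall
    obtain ⟨T, hT⟩ := hK.exists_finset_ball_subdivision b l
    refine hb ⟨T.biUnion G, fun x hx => ?_⟩
    obtain ⟨t, htT, hxt⟩ := Set.mem_iUnion₂.1 (hT hx)
    have ht : t ∈ ball v b l :=
      hK.ball_subset_ball_of_mem hx le_rfl (ball_antitone x (by omega) (hK.mem_ball_comm.1 hxt))
    obtain ⟨s, hs, hxs⟩ := Set.mem_iUnion₂.1 (hG t ht hxt)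
    exact Set.mem_iUnion₂.2 ⟨s, Finset.mem_biUnion.2 ⟨t, htT, hs⟩, hxs⟩
  have step (b : K) (l : ℤ) : ∃ b', ¬ Covered b l → b' ∈ ball v b l ∧ ¬ Covered b' (l + 1) := by
    by_cases hb : Covered b l
    · exact ⟨b, fun h => (h hb).elim⟩
    · obtain ⟨b', hb', hbad⟩ := subball b l hb
      exact ⟨b', fun _ => ⟨hb', hbad⟩⟩
  choose next hnext using step
  by_contra ha
  let seq (j : ℕ) : K := Nat.rec a (fun j b => next b (m + j)) j
  have hbad : ∀ j : ℕ, ¬ Covered (seq j) (m + j) := by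
    intro j
    induction j with
    | zero => rw [Nat.cast_zero, add_zero]; exact ha
    | succ j ih => simpa [seq, add_assoc] using (hnext _ _ ih).2
  obtain ⟨L, hL⟩ := hK.exists_forall_mem_ball seq m fun j => (hnext _ _ (hbad j)).1
  set j := (r L - m).toNat
  refine hbad j ⟨{L}, fun x hx => Set.mem_iUnion₂.2 ⟨L, Finset.mem_singleton_self L, ?_⟩⟩
  exact hK.ball_subset_ball_of_mem (ball_antitone L (by omega) (hK.mem_ball_comm.1 (hL j)))
    (by omega) hx

def valNhds (v : K → WithTop ℤ) (x : K) : Filter K := ⨅ k : ℤ, 𝓟 (ball v x k)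

theorem eventually_valNhds_iff {x : K} {p : K → Prop} :
    (∀ᶠ t in valNhds v x, p t) ↔ ∃ k : ℤ, ∀ t ∈ ball v x k, p t :=
  (hasBasis_iInf_principal (ball_antitone x).directed_ge).eventually_iff.trans (by simp)

theorem eventually_map_sub_eq (hK : IsLocalField v) {a x : K} (hx : x ≠ a) :
    ∀ᶠ t in valNhds v x, v (t - a) = v (x - a) := by
  obtain ⟨d, hd⟩ := WithTop.ne_top_iff_exists.1 (hK.ne_top _ (sub_ne_zero.2 hx))
  refine eventually_valNhds_iff.2 ⟨d + 1, fun t ht => hK.map_eq_of_lt_sub ?_⟩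
  rw [sub_sub_sub_cancel_right, ← hd]
  exact (WithTop.coe_lt_coe.2 (Int.lt_succ d)).trans_le ht

theorem eventually_ne (hK : IsLocalField v) {a x : K} (hx : x ≠ a) : ∀ᶠ t in valNhds v x, t ≠ a :=
  (hK.eventually_map_sub_eq hx).mono fun t ht hta => by
    rw [hta, sub_self, hK.map_zero] at ht
    exact hK.ne_top _ (sub_ne_zero.2 hx) ht.symm

theorem eventually_notMem (hK : IsLocalField v) {S : Set K} (hS : S.Finite) {x : K} (hx : x ∉ S) :
    ∀ᶠ t in valNhds v x, t ∉ S :=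
  (hS.eventually_all.2 fun _ ha => hK.eventually_ne (ne_of_mem_of_not_mem ha hx).symm).mono
    fun t ht htS => ht t htS rfl

theorem eventually_pow_mul_eq (hK : IsLocalField v) {n : ℕ} (hn : (n : K) ≠ 0) {a x : K}
    (hx : x ≠ a) : ∀ᶠ t in valNhds v x, ∃ s ≠ 0, t - a = s ^ n * (x - a) := by
  lift v (n : K) to ℤ using hK.ne_top _ hn with c hc
  have hc0 : 0 ≤ c := by exact_mod_cast hc ▸ hK.map_natCast_nonneg n
  lift v (x - a) to ℤ using hK.ne_top _ (sub_ne_zero.2 hx) with d hd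
  refine eventually_valNhds_iff.2 ⟨2 * c + 1 + d, fun t ht => ?_⟩
  have hu : (t - a) / (x - a) ∈ ball v 1 (2 * c + 1) := by
    rw [mem_ball, show (t - a) / (x - a) - 1 = (t - x) / (x - a) by
      field_simp [sub_ne_zero.2 hx]; ring, hK.map_div, ← hd]
    exact coe_le_sub_coe_of_add_le ht
  obtain ⟨s, hs1, hs⟩ := hK.exists_pow_eq_of_mem_ball hc.symm hu
  refine ⟨s, hK.ne_zero_of_mem_ball_one (by omega) hs1, ?_⟩
  rw [hs]
  field_simp [sub_ne_zero.2 hx]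

theorem eventually_eq_of_mem_ball {β : Type*} (hK : IsLocalField v) {n : ℕ} (hn : (n : K) ≠ 0)
    {g : K → β} {S : Set K} (hS : S.Finite) {t₀ : K} {k : ℤ}
    (hg : ∀ t₁ t₂ : K, t₁ ≠ t₀ → t₂ ≠ t₀ → (k : WithTop ℤ) ≤ v (t₁ - t₀) →
      (k : WithTop ℤ) ≤ v (t₂ - t₀) → t₁ ∉ S → t₂ ∉ S →
      (∃ s : K, s ≠ 0 ∧ t₁ - t₀ = s ^ n * (t₂ - t₀)) → g t₁ = g t₂)
    {x : K} (hx : x ∈ ball v t₀ k) (hxt₀ : x ≠ t₀) (hxS : x ∉ S) :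
    ∀ᶠ t in valNhds v x, t ∉ S ∧ g t = g x := by
  filter_upwards [hK.eventually_map_sub_eq hxt₀, hK.eventually_ne hxt₀,
    hK.eventually_pow_mul_eq hn hxt₀, hK.eventually_notMem hS hxS] with t hvt htt₀ hpow htS
  exact ⟨htS, hg t x htt₀ hxt₀ (hvt ▸ hx) hx htS hxS hpow⟩

theorem eventually_eq_of_map_le {β : Type*} (hK : IsLocalField v) {n : ℕ} (hn : (n : K) ≠ 0)
    {g : K → β} {S : Set K} (hS : S.Finite) {k : ℤ}
    (hg : ∀ t₁ t₂ : K, v t₁ ≤ k → v t₂ ≤ k → t₁ ∉ S → t₂ ∉ S →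
      (∃ s : K, s ≠ 0 ∧ t₁⁻¹ = s ^ n * t₂⁻¹) → g t₁ = g t₂)
    {x : K} (hx : v x ≤ k) (hxS : x ∉ S) : ∀ᶠ t in valNhds v x, t ∉ S ∧ g t = g x := by
  have hx0 : x ≠ 0 := by
    rintro rfl
    simp [hK.map_zero] at hx
  filter_upwards [hK.eventually_map_sub_eq hx0, hK.eventually_pow_mul_eq hn hx0,
    hK.eventually_notMem hS hxS] with t hvt ⟨s, hs, hts⟩ htS
  rw [sub_zero, sub_zero] at hvt hts
  refine ⟨htS, hg t x (hvt ▸ hx) hx htS hxS ⟨s⁻¹, inv_ne_zero hs, ?_⟩⟩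
  rw [hts, mul_inv, inv_pow]

end IsLocalField

/-- `Option K` models `ℙ¹(K)`, with `none` the point at infinity. -/
theorem stmt10 {K : Type*} [Field K] (v : K → WithTop ℤ) (hK : IsLocalField v)
    (n : ℕ) (hn : 0 < n) (hchar : ringChar K = 0 ∨ ¬ (ringChar K ∣ n))
    (f : Option K → ℂ) (E : Set (Option K)) (hE : E.Finite)
    (hloc : ∀ t₀ : K, ∃ k : ℤ, ∀ t₁ t₂ : K, t₁ ≠ t₀ → t₂ ≠ t₀ →
        (k : WithTop ℤ) ≤ v (t₁ - t₀) → (k : WithTop ℤ) ≤ v (t₂ - t₀) →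
        some t₁ ∉ E → some t₂ ∉ E →
        (∃ s : K, s ≠ 0 ∧ t₁ - t₀ = s ^ n * (t₂ - t₀)) → f (some t₁) = f (some t₂))
    (hlocInf : ∃ k : ℤ, ∀ t₁ t₂ : K, v t₁ ≤ (k : WithTop ℤ) → v t₂ ≤ (k : WithTop ℤ) →
        some t₁ ∉ E → some t₂ ∉ E →
        (∃ s : K, s ≠ 0 ∧ t₁⁻¹ = s ^ n * t₂⁻¹) → f (some t₁) = f (some t₂)) :
    ∃ Sig : Set (Option K), Sig.Finite ∧
      (∀ x : K, some x ∉ Sig → some x ∉ E ∧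
        ∃ k : ℤ, ∀ t : K, (k : WithTop ℤ) ≤ v (t - x) →
          some t ∉ E ∧ f (some t) = f (some x)) ∧
      ((none : Option K) ∉ Sig → (none : Option K) ∉ E ∧
        ∃ k : ℤ, ∀ t : K, v t ≤ (k : WithTop ℤ) →
          some t ∉ E ∧ f (some t) = f none) := by
  have hn' : (n : K) ≠ 0 := by
    rw [Ne, ringChar.spec]
    rcases hchar with h0 | h
    · rw [h0, zero_dvd_iff]
      omega
    · exact h
  obtain ⟨kinf, hkinf⟩ := hlocInf
  choose k hk using hloc
  have hS : (some ⁻¹' E).Finite := hE.preimage (Option.some_injective K).injOn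
  obtain ⟨F, hF⟩ := hK.exists_finset_ball_cover k 0 kinf
  refine ⟨E ∪ insert none (some '' F), hE.union ((F.finite_toSet.image some).insert none),
    fun x hx => ?_, fun h => (h (by simp)).elim⟩
  simp only [Set.mem_union, Set.mem_insert_iff, Set.mem_image, Finset.mem_coe, not_or,
    reduceCtorEq, false_or, Option.some.injEq, exists_eq_right] at hx
  obtain ⟨hxE, hxF⟩ := hx
  refine ⟨hxE, IsLocalField.eventually_valNhds_iff.1 ?_⟩
  by_cases hxinf : v x ≤ kinf
  · exact hK.eventually_eq_of_map_le hn' hS hkinf hxinf hxE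
  · have hx0 : x ∈ IsLocalField.ball v 0 kinf := by
      rw [IsLocalField.mem_ball, sub_zero]
      exact (not_le.1 hxinf).le
    obtain ⟨t₀, ht₀, hxt₀⟩ := Set.mem_iUnion₂.1 (hF hx0)
    exact hK.eventually_eq_of_mem_ball hn' hS (hk t₀) hxt₀ (by rintro rfl; exact hxF ht₀) hxE
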